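/- For every t ∈ (−1,1) and every x ∈ (0,1), the function c_t is differentiable at x and its derivative satisfies 1 − |P′(x)| ≤ (c_t)′(x) ≤ 1 + |P′(x)|, where P′(x) = (1 − 2x)/2; in particular (c_t)′(x) ≥ 1/2 > 0, so c_t is strictly increasing on (0,1). -/

import Mathlib

/-- The polynomial `P(x) = (x - x^2)/2` from the paper's appendix. -/
noncomputable def P (x : ℝ) : ℝ := (x - x ^ 2) / 2

/-- `φ(t,x) = P(x)·t / ((1 - P(x))·t + P(x))`, intended for `t ≥ 0`. -/
noncomputable def φ (t x : ℝ) : ℝ := P x * t / ((1 - P x) * t + P x)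

/-- The path of maps `c_t(x) = x + φ(t,x)` for `t ≥ 0`, `x - φ(-t,x)` for `t < 0`. -/
noncomputable def c (t x : ℝ) : ℝ := if 0 ≤ t then x + φ t x else x - φ (-t) x

/-!
Writing `D(s,x) = (1 - P x) s + P x`, the quotient rule gives
`∂ₓ φ(s,x) = P'(x) s² / D(s,x)²` (the terms in `P` cancel). For `0 ≤ s ≤ 1` we have
`D(s,x) = s + P x (1 - s) ≥ s`, so `|∂ₓ φ(s,x)| ≤ |P'(x)|`, and `c_t = id ± φ(|t|, ·)`.
Since `|P'(x)| ≤ 1/2` on `(0,1)`, the derivative of `c_t` is positive there.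
-/

open Set

lemma hasDerivAt_P (x : ℝ) : HasDerivAt P ((1 - 2 * x) / 2) x := by
  have := ((hasDerivAt_id x).sub (hasDerivAt_pow 2 x)).div_const 2
  exact this.congr_deriv (by simp only [Nat.cast_ofNat]; ring)

lemma P_pos {x : ℝ} (hx : x ∈ Ioo (0 : ℝ) 1) : 0 < P x := by
  have : 0 < x * (1 - x) := mul_pos hx.1 (by linarith [hx.2])
  unfold P; nlinarith

lemma hasDerivAt_φ {s x : ℝ} (hD : (1 - P x) * s + P x ≠ 0) :
    HasDerivAt (φ s) ((1 - 2 * x) / 2 * s ^ 2 / ((1 - P x) * s + P x) ^ 2) x := by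
  have hDen : HasDerivAt (fun y => (1 - P y) * s + P y) ((1 - 2 * x) / 2 * (1 - s)) x :=
    ((((hasDerivAt_const x 1).sub (hasDerivAt_P x)).mul_const s).add
      (hasDerivAt_P x)).congr_deriv (by ring)
  refine (((hasDerivAt_P x).mul_const s).div hDen hD).congr_deriv ?_
  field_simp
  ring

lemma abs_mul_sq_div_sq_le (a : ℝ) {s D : ℝ} (hs : 0 ≤ s) (hsD : s ≤ D) :
    |a * s ^ 2 / D ^ 2| ≤ |a| := by
  have hq : (s / D) ^ 2 ≤ 1 :=
    pow_le_one₀ (div_nonneg hs (hs.trans hsD)) (div_le_one_of_le₀ hsD (hs.trans hsD))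
  calc |a * s ^ 2 / D ^ 2| = |a| * (s / D) ^ 2 := by
        rw [mul_div_assoc, ← div_pow, abs_mul, abs_of_nonneg (sq_nonneg (s / D))]
    _ ≤ |a| := mul_le_of_le_one_right (abs_nonneg a) hq

lemma exists_hasDerivAt_φ_abs_le {s x : ℝ} (hs : s ∈ Icc (0 : ℝ) 1) (hx : x ∈ Ioo (0 : ℝ) 1) :
    ∃ e, HasDerivAt (φ s) e x ∧ |e| ≤ |(1 - 2 * x) / 2| := by
  have hD : (1 - P x) * s + P x = s + P x * (1 - s) := by ring
  have hsD : s ≤ (1 - P x) * s + P x := by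
    rw [hD]; exact le_add_of_nonneg_right (mul_nonneg (P_pos hx).le (sub_nonneg.mpr hs.2))
  have hD0 : (1 - P x) * s + P x ≠ 0 := by
    rw [hD]; nlinarith [P_pos hx, hs.1, hs.2]
  exact ⟨_, hasDerivAt_φ hD0, abs_mul_sq_div_sq_le _ hs.1 hsD⟩

lemma exists_hasDerivAt_c_abs_sub_one_le {t x : ℝ} (ht : t ∈ Icc (-1 : ℝ) 1)
    (hx : x ∈ Ioo (0 : ℝ) 1) :
    ∃ d, HasDerivAt (c t) d x ∧ |d - 1| ≤ |(1 - 2 * x) / 2| := by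
  rcases le_or_gt 0 t with h0t | h0t
  · obtain ⟨e, he, hle⟩ := exists_hasDerivAt_φ_abs_le ⟨h0t, ht.2⟩ hx
    have hc : c t = fun y => y + φ t y := funext fun y => if_pos h0t
    exact ⟨1 + e, hc ▸ (hasDerivAt_id x).add he, by simpa using hle⟩
  · obtain ⟨e, he, hle⟩ :=
      exists_hasDerivAt_φ_abs_le (s := -t) ⟨by linarith, by linarith [ht.1]⟩ hx
    have hc : c t = fun y => y - φ (-t) y := funext fun y => if_neg h0t.not_ge
    exact ⟨1 - e, hc ▸ (hasDerivAt_id x).sub he, by simpa using hle⟩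

theorem stmt_4 :
    (∀ t ∈ Set.Ioo (-1 : ℝ) 1, ∀ x ∈ Set.Ioo (0 : ℝ) 1,
      DifferentiableAt ℝ (c t) x ∧
      1 - |(1 - 2 * x) / 2| ≤ deriv (c t) x ∧
      deriv (c t) x ≤ 1 + |(1 - 2 * x) / 2| ∧
      (1 : ℝ) / 2 ≤ deriv (c t) x ∧ (0 : ℝ) < deriv (c t) x) ∧
    (∀ t ∈ Set.Ioo (-1 : ℝ) 1, StrictMonoOn (c t) (Set.Ioo (0 : ℝ) 1)) := by
  have hderiv : ∀ t ∈ Ioo (-1 : ℝ) 1, ∀ x ∈ Ioo (0 : ℝ) 1,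
      DifferentiableAt ℝ (c t) x ∧
      1 - |(1 - 2 * x) / 2| ≤ deriv (c t) x ∧
      deriv (c t) x ≤ 1 + |(1 - 2 * x) / 2| ∧
      (1 : ℝ) / 2 ≤ deriv (c t) x ∧ (0 : ℝ) < deriv (c t) x := by
    intro t ht x hx
    obtain ⟨d, hd, hle⟩ := exists_hasDerivAt_c_abs_sub_one_le (Ioo_subset_Icc_self ht) hx
    obtain ⟨hl, hu⟩ := abs_le.mp hle
    have hP' : |(1 - 2 * x) / 2| ≤ 1 / 2 := abs_le.mpr ⟨by linarith [hx.2], by linarith [hx.1]⟩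
    rw [hd.deriv]
    exact ⟨hd.differentiableAt, by linarith, by linarith, by linarith, by linarith⟩
  refine ⟨hderiv, fun t ht => strictMonoOn_of_deriv_pos (convex_Ioo 0 1) ?_ ?_⟩
  · exact fun x hx => (hderiv t ht x hx).1.continuousAt.continuousWithinAt
  · intro x hx
    rw [interior_Ioo] at hx
    exact (hderiv t ht x hx).2.2.2.2
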